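/- arXiv:2508.01321 — 2 statements merged into one kernel-verified Lean document; each statement's English description precedes it below -/
import Mathlib

section
/- Let g, g̃ : ℝ → ℝ be strictly increasing continuous functions and ε a random variable with continuous strictly increasing CDF. If g(ε) and g̃(ε) have the same distribution, then g = g̃ on the support of ε. -/
open MeasureTheory ProbabilityTheory Set

private lemma aux_le {Ω : Type*} [MeasurableSpace Ω] (μ : Measure Ω) [IsProbabilityMeasure μ]
    (g gt : ℝ → ℝ) (hg : StrictMono g) (hgc : Continuous g)
    (hgt : StrictMono gt) (hgtc : Continuous gt)
    (ε : Ω → ℝ) (hε : Measurable ε)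
    (hcdfm : StrictMono (cdf (μ.map ε)))
    (hdist : μ.map (fun ω => g (ε ω)) = μ.map (fun ω => gt (ε ω))) :
    ∀ x, gt x ≤ g x := by
  intro x
  by_contra h
  push_neg at h  -- h : g x < gt x
  have hev : ∀ᶠ y in nhds x, g x < gt y :=
    (hgtc.tendsto x).eventually_const_lt h
  have hev' : ∀ᶠ y in nhdsWithin x (Iio x), g x < gt y :=
    hev.filter_mono nhdsWithin_le_nhds
  obtain ⟨x', hgx', hx'lt⟩ := (hev'.and eventually_mem_nhdsWithin).exists
  rw [mem_Iio] at hx'lt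
  have hmg : Measurable fun ω => g (ε ω) := hgc.measurable.comp hε
  have hmgt : Measurable fun ω => gt (ε ω) := hgtc.measurable.comp hε
  have h1 : (μ.map (fun ω => g (ε ω))) (Iic (g x)) = (μ.map ε) (Iic x) := by
    rw [Measure.map_apply hmg measurableSet_Iic, Measure.map_apply hε measurableSet_Iic]
    congr 1
    ext ω
    simp [hg.le_iff_le]
  have h2 : (μ.map (fun ω => gt (ε ω))) (Iic (g x)) ≤ (μ.map ε) (Iic x') := by
    rw [Measure.map_apply hmgt measurableSet_Iic, Measure.map_apply hε measurableSet_Iic]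
    apply measure_mono
    intro ω hω
    simp only [mem_preimage, mem_Iic] at *
    exact (hgt.lt_iff_lt.mp (hω.trans_lt hgx')).le
  have hprob : IsProbabilityMeasure (μ.map ε) := Measure.isProbabilityMeasure_map hε.aemeasurable
  have hlt : (μ.map ε) (Iic x') < (μ.map ε) (Iic x) := by
    have := hcdfm hx'lt
    rw [cdf_eq_real, cdf_eq_real] at this
    exact (ENNReal.toReal_lt_toReal (measure_ne_top _ _) (measure_ne_top _ _)).mp this
  have : (μ.map ε) (Iic x) ≤ (μ.map ε) (Iic x') := by
    calc (μ.map ε) (Iic x) = (μ.map (fun ω => g (ε ω))) (Iic (g x)) := h1.symm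
    _ = (μ.map (fun ω => gt (ε ω))) (Iic (g x)) := by rw [hdist]
    _ ≤ (μ.map ε) (Iic x') := h2
  exact absurd this (not_le.mpr hlt)

/-- If `g, g̃` are strictly increasing continuous functions and `ε` has continuous strictly
increasing CDF (so its support is all of `ℝ`), and `g(ε)` and `g̃(ε)` have the same
distribution, then `g = g̃`. -/
theorem stmt2 {Ω : Type*} [MeasurableSpace Ω] (μ : Measure Ω) [IsProbabilityMeasure μ]
    (g gt : ℝ → ℝ) (hg : StrictMono g) (hgc : Continuous g)
    (hgt : StrictMono gt) (hgtc : Continuous gt)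
    (ε : Ω → ℝ) (hε : Measurable ε)
    (hcdfc : Continuous (cdf (μ.map ε))) (hcdfm : StrictMono (cdf (μ.map ε)))
    (hdist : μ.map (fun ω => g (ε ω)) = μ.map (fun ω => gt (ε ω))) :
    g = gt := by
  funext x
  exact le_antisymm
    (aux_le μ gt g hgt hgtc hg hgc ε hε hcdfm hdist.symm x)
    (aux_le μ g gt hg hgc hgt hgtc ε hε hcdfm hdist x)
end

section
/- Suppose for all z in a set with at least two elements mapping to distinct values u(z) := g_A⁻¹(z, a), and for all η, the identity T(ρ̃·u(z) + √(1-ρ̃²)·η) = ρ·u(z) + √(1-ρ²)·η holds for a fixed measurable T : ℝ → ℝ and ρ, ρ̃ ∈ (-1,1). Then ρ = ρ̃ and T is the identity on the relevant range. -/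
/-!
Solving for `T` at an arbitrary point shows that, for each fixed `z`, `T` is affine with slope
`√(1-ρ²)/√(1-ρ̃²)` and intercept `(ρ - √(1-ρ²)/√(1-ρ̃²) · ρ̃) · u(z)`. Since `T` does not depend
on `z` while `u(z)` takes two distinct values, the intercept vanishes, i.e.
`ρ/√(1-ρ²) = ρ̃/√(1-ρ̃²)`, and `r ↦ r/√(1-r²)` is injective on `(-1,1)`.
-/

open Real

lemma apply_eq_of_forall_add_mul {K : Type*} [Field K] {T : K → K} {a b s t : K} (ht : t ≠ 0)
    (h : ∀ η, T (a + t * η) = b + s * η) (x : K) : T x = b + s / t * (x - a) := by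
  calc T x = T (a + t * ((x - a) / t)) := by rw [mul_div_cancel₀ _ ht, add_sub_cancel]
    _ = b + s / t * (x - a) := by rw [h]; ring

lemma apply_zero_eq_mul_of_forall {K : Type*} [Field K] {T : K → K} {ρ ρt u s t : K}
    (ht : t ≠ 0) (h : ∀ η, T (ρt * u + t * η) = ρ * u + s * η) :
    T 0 = (ρ - s / t * ρt) * u := by
  rw [apply_eq_of_forall_add_mul ht h]
  ring

lemma eq_of_eq_sqrt_one_sub_sq_div_mul {ρ ρt : ℝ} (hρ : ρ ∈ Set.Ioo (-1 : ℝ) 1)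
    (hρt : ρt ∈ Set.Ioo (-1 : ℝ) 1) (h : ρ = √(1 - ρ ^ 2) / √(1 - ρt ^ 2) * ρt) : ρ = ρt := by
  have hρ2 : 0 < 1 - ρ ^ 2 := by nlinarith [hρ.1, hρ.2]
  have hρt2 : 0 < 1 - ρt ^ 2 := by nlinarith [hρt.1, hρt.2]
  have hs := sqrt_pos.mpr hρ2
  have ht := sqrt_pos.mpr hρt2
  have hcross : ρ * √(1 - ρt ^ 2) = √(1 - ρ ^ 2) * ρt := by
    rwa [eq_comm, div_mul_eq_mul_div, div_eq_iff ht.ne', eq_comm] at h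
  have hsq : ρ ^ 2 = ρt ^ 2 := by
    have := congrArg (· ^ 2) hcross
    simp only [mul_pow, sq_sqrt hρ2.le, sq_sqrt hρt2.le] at this
    linarith
  rcases sq_eq_sq_iff_eq_or_eq_neg.mp hsq with heq | hneg
  · exact heq
  · -- `ρ` and `ρ̃` have the same sign by `hcross`, so `ρ = -ρ̃` forces both to vanish
    have : ρt * (√(1 - ρt ^ 2) + √(1 - ρ ^ 2)) = 0 := by
      linear_combination -hcross + √(1 - ρt ^ 2) * hneg
    have hρt0 : ρt = 0 := (mul_eq_zero.mp this).resolve_right (add_pos ht hs).ne'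
    rw [hneg, hρt0, neg_zero]

theorem stmt15_general (T : ℝ → ℝ) (ρ ρt : ℝ)
    (hρ : ρ ∈ Set.Ioo (-1 : ℝ) 1) (hρt : ρt ∈ Set.Ioo (-1 : ℝ) 1)
    (u : ℝ → ℝ) (S : Set ℝ)
    (hS : ∃ z₁ ∈ S, ∃ z₂ ∈ S, u z₁ ≠ u z₂)
    (h : ∀ z ∈ S, ∀ η : ℝ,
      T (ρt * u z + Real.sqrt (1 - ρt ^ 2) * η) = ρ * u z + Real.sqrt (1 - ρ ^ 2) * η) :
    ρ = ρt ∧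
      ∀ z ∈ S, ∀ η : ℝ,
        T (ρt * u z + Real.sqrt (1 - ρt ^ 2) * η) =
          ρt * u z + Real.sqrt (1 - ρt ^ 2) * η := by
  obtain ⟨z₁, hz₁, z₂, hz₂, hu⟩ := hS
  have hst : √(1 - ρt ^ 2) ≠ 0 := (sqrt_pos.mpr (by nlinarith [hρt.1, hρt.2])).ne'
  have hT0 : ∀ z ∈ S, T 0 = (ρ - √(1 - ρ ^ 2) / √(1 - ρt ^ 2) * ρt) * u z :=
    fun z hz => apply_zero_eq_mul_of_forall hst (h z hz)
  have hintercept : ρ - √(1 - ρ ^ 2) / √(1 - ρt ^ 2) * ρt = 0 := by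
    by_contra hne
    exact hu (mul_left_cancel₀ hne ((hT0 z₁ hz₁).symm.trans (hT0 z₂ hz₂)))
  obtain rfl : ρ = ρt := eq_of_eq_sqrt_one_sub_sq_div_mul hρ hρt (sub_eq_zero.mp hintercept)
  exact ⟨rfl, h⟩

/-- If for all `z` in a set `S` containing two points with distinct values `u z`, and all
`η`, the identity `T(ρ̃·u(z) + √(1-ρ̃²)·η) = ρ·u(z) + √(1-ρ²)·η` holds with
`ρ, ρ̃ ∈ (-1,1)`, then `ρ = ρ̃` and `T` is the identity on the relevant range. -/
theorem stmt15 (T : ℝ → ℝ) (hT : Measurable T) (ρ ρt : ℝ)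
    (hρ : ρ ∈ Set.Ioo (-1 : ℝ) 1) (hρt : ρt ∈ Set.Ioo (-1 : ℝ) 1)
    (u : ℝ → ℝ) (S : Set ℝ)
    (hS : ∃ z₁ ∈ S, ∃ z₂ ∈ S, u z₁ ≠ u z₂)
    (h : ∀ z ∈ S, ∀ η : ℝ,
      T (ρt * u z + Real.sqrt (1 - ρt ^ 2) * η) = ρ * u z + Real.sqrt (1 - ρ ^ 2) * η) :
    ρ = ρt ∧
      ∀ z ∈ S, ∀ η : ℝ,
        T (ρt * u z + Real.sqrt (1 - ρt ^ 2) * η) =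
          ρt * u z + Real.sqrt (1 - ρt ^ 2) * η :=
  stmt15_general T ρ ρt hρ hρt u S hS h
end
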